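/- arXiv:2007.07694 — 6 statements merged into one kernel-verified Lean document; each statement's English description precedes it below -/
import Mathlib

section
/- Let Σ be a finite alphabet and let f, g : Σ* → ℝ≥0 be functions on finite words such that the total mass ∑_{w ∈ Σ*} f(w) is finite. Then, with all sums and ratios evaluated in ℝ≥0∞ (so 0/0 = 0 and x/0 = ∞ for x > 0), the supremum over all sets of words equals the supremum over single words: ⨆_{E ⊆ Σ*} (∑_{w ∈ E} f(w)) / (∑_{w ∈ E} g(w)) = ⨆_{w ∈ Σ*} f(w)/g(w). -/
open scoped ENNReal NNReal

/-- when the total mass of `f` is finite, the supremum of ratios of sums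
over all sets of words equals the supremum of ratios over single words (in `ℝ≥0∞`). -/
theorem sup_ratio_over_sets_eq_sup_over_words {Sigma : Type*} [Fintype Sigma]
    (f g : List Sigma → ℝ≥0)
    (hf : (∑' w : List Sigma, (f w : ℝ≥0∞)) < ⊤) :
    (⨆ E : Set (List Sigma),
        (∑' w : E, (f (w : List Sigma) : ℝ≥0∞)) / (∑' w : E, (g (w : List Sigma) : ℝ≥0∞)))
      = ⨆ w : List Sigma, (f w : ℝ≥0∞) / (g w : ℝ≥0∞) := by
  apply le_antisymm
  · refine iSup_le fun E => ?_
    rcases eq_or_ne (⨆ w, (f w : ℝ≥0∞) / g w) ⊤ with hr | hr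
    · rw [hr]; exact le_top
    · set r := ⨆ w, (f w : ℝ≥0∞) / g w with hrdef
      have hpt : ∀ w, (f w : ℝ≥0∞) ≤ r * g w := by
        intro w
        have h1 : (f w : ℝ≥0∞) / g w ≤ r := le_iSup (fun w => (f w : ℝ≥0∞) / g w) w
        rcases eq_or_ne ((g w : ℝ≥0∞)) 0 with hg | hg
        · have : (f w : ℝ≥0∞) = 0 := by
            by_contra hfw
            rw [hg, ENNReal.div_zero hfw] at h1
            exact hr (top_le_iff.mp h1)
          simp [this]
        · calc (f w : ℝ≥0∞) = (f w : ℝ≥0∞) / g w * g w :=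
                (ENNReal.div_mul_cancel hg (by simp)).symm
          _ ≤ r * g w := mul_le_mul_left h1 _
      refine ENNReal.div_le_of_le_mul ?_
      calc (∑' w : E, (f (w : List Sigma) : ℝ≥0∞))
          ≤ ∑' w : E, r * (g (w : List Sigma) : ℝ≥0∞) :=
            ENNReal.tsum_le_tsum fun w => hpt w
        _ = r * ∑' w : E, (g (w : List Sigma) : ℝ≥0∞) := ENNReal.tsum_mul_left
  · refine iSup_le fun w => ?_
    have h1 : (∑' x : ({w} : Set (List Sigma)), (f (x : List Sigma) : ℝ≥0∞)) = f w :=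
      tsum_singleton w (fun x => (f x : ℝ≥0∞))
    have h2 : (∑' x : ({w} : Set (List Sigma)), (g (x : List Sigma) : ℝ≥0∞)) = g w :=
      tsum_singleton w (fun x => (g x : ℝ≥0∞))
    have := le_iSup (fun E : Set (List Sigma) =>
      (∑' x : E, (f (x : List Sigma) : ℝ≥0∞)) / (∑' x : E, (g (x : List Sigma) : ℝ≥0∞)))
      ({w} : Set (List Sigma))
    rwa [h1, h2] at this
end

section
/- Let Σ be a finite alphabet, let ν_s, ν_{s'} : Σ* → ℝ≥0 be functions on finite words, and let δ be a real number with 0 < δ < 1 such that for every nonempty word w ∈ Σ*, if ν_{s'}(w) > 0 then ν_{s'}(w) > δ^{|w|}. Then the following are equivalent: (i) there exist C > 0 and k ∈ ℕ such that ν_s(w) ≤ C·ν_{s'}(w) for all words w with |w| ≥ k (s is eventually big-O of s'); (ii) the set {w ∈ Σ* | ν_s(w) > 0 and ν_{s'}(w) = 0} is finite, and there exists C > 0 such that ν_s(w) ≤ C·(ν_{s'}(w) + δ^{|w|}) for all nonempty words w. -/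
open scoped NNReal

/-!
Up to finitely many words the two conditions say the same thing. Words shorter than `k` form a
finite set, on which `ν_s` is dominated by a multiple of the positive weight `δ^{|w|}`; and
conversely, beyond the longest word of the finite language difference, `ν_{s'} w` is either `0`
(and then so is `ν_s w`) or larger than `δ^{|w|}`, so that `ν_{s'} + δ^{|w|} ≤ 2 ν_{s'}`.
-/

theorem Set.Finite.exists_pos_le_mul {ι : Type*} {s : Set ι} (hs : s.Finite) (f g : ι → ℝ)
    (hg : ∀ x ∈ s, 0 < g x) : ∃ C : ℝ, 0 < C ∧ ∀ x ∈ s, f x ≤ C * g x := by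
  obtain ⟨b, hb⟩ := (hs.image fun x => f x / g x).bddAbove
  refine ⟨max b 1, by positivity, fun x hx => ?_⟩
  have hratio : f x / g x ≤ max b 1 := (hb ⟨x, hx, rfl⟩).trans (le_max_left _ _)
  rwa [div_le_iff₀ (hg x hx)] at hratio

section Words

variable {α : Type*} {f g : List α → ℝ≥0}

theorem finite_setOf_pos_and_eq_zero_of_le_mul [Finite α] {C : ℝ} {k : ℕ}
    (h : ∀ w : List α, k ≤ w.length → (f w : ℝ) ≤ C * g w) :
    {w : List α | 0 < f w ∧ g w = 0}.Finite := by
  refine (List.finite_length_lt α k).subset fun w ⟨hfw, hgw⟩ => ?_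
  by_contra hlong
  have hle := h w (not_lt.mp hlong)
  rw [hgw, NNReal.coe_zero, mul_zero] at hle
  exact hle.not_gt (NNReal.coe_pos.mpr hfw)

theorem exists_le_mul_add_pow_of_le_mul [Finite α] {C δ : ℝ} {k : ℕ} (hC : 0 < C) (hδ : 0 < δ)
    (h : ∀ w : List α, k ≤ w.length → (f w : ℝ) ≤ C * g w) :
    ∃ C' : ℝ, 0 < C' ∧ ∀ w : List α, (f w : ℝ) ≤ C' * ((g w : ℝ) + δ ^ w.length) := by
  obtain ⟨B, -, hB⟩ := (List.finite_length_lt α k).exists_pos_le_mul (fun w => (f w : ℝ))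
    (fun w => δ ^ w.length) fun w _ => pow_pos hδ _
  refine ⟨max C B, lt_max_of_lt_left hC, fun w => ?_⟩
  have hg : (0 : ℝ) ≤ g w := (g w).coe_nonneg
  have hpow : (0 : ℝ) < δ ^ w.length := pow_pos hδ _
  rcases le_or_gt k w.length with hlong | hshort
  · calc (f w : ℝ) ≤ C * g w := h w hlong
      _ ≤ max C B * ((g w : ℝ) + δ ^ w.length) := by gcongr <;> bound
  · calc (f w : ℝ) ≤ B * δ ^ w.length := hB w hshort
      _ ≤ max C B * ((g w : ℝ) + δ ^ w.length) := by gcongr <;> bound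

theorem le_two_mul_of_le_mul_add_pow {C δ : ℝ} {N : ℕ}
    (hN : ∀ w ∈ {w : List α | 0 < f w ∧ g w = 0}, w.length ≤ N)
    (hlow : ∀ w : List α, w ≠ [] → 0 < g w → δ ^ w.length < (g w : ℝ))
    (h : ∀ w : List α, w ≠ [] → (f w : ℝ) ≤ C * ((g w : ℝ) + δ ^ w.length))
    (hC : 0 < C) (w : List α) (hw : N + 1 ≤ w.length) : (f w : ℝ) ≤ 2 * C * g w := by
  have hne : w ≠ [] := List.ne_nil_of_length_pos (by omega)
  rcases eq_zero_or_pos (g w) with hg | hg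
  · have hf : f w = 0 := by
      by_contra hf
      have := hN w ⟨pos_iff_ne_zero.mpr hf, hg⟩
      omega
    simp [hf, hg]
  · calc (f w : ℝ) ≤ C * ((g w : ℝ) + δ ^ w.length) := h w hne
      _ ≤ C * ((g w : ℝ) + g w) := by gcongr; exact (hlow w hne hg).le
      _ = 2 * C * g w := by ring

end Words

theorem eventually_bigO_iff_finite_diff_and_bigO_completed_general
    {Sigma : Type*} [Fintype Sigma] (νs νs' : List Sigma → ℝ≥0) (δ : ℝ)
    (hδ0 : 0 < δ)
    (hlow : ∀ w : List Sigma, w ≠ [] → 0 < νs' w → δ ^ w.length < (νs' w : ℝ)) :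
    (∃ C : ℝ, 0 < C ∧ ∃ k : ℕ, ∀ w : List Sigma, k ≤ w.length →
        (νs w : ℝ) ≤ C * (νs' w : ℝ)) ↔
    ({w : List Sigma | 0 < νs w ∧ νs' w = 0}.Finite ∧
      ∃ C : ℝ, 0 < C ∧ ∀ w : List Sigma, w ≠ [] →
        (νs w : ℝ) ≤ C * ((νs' w : ℝ) + δ ^ w.length)) := by
  constructor
  · rintro ⟨C, hC, k, h⟩
    obtain ⟨C', hC', h'⟩ := exists_le_mul_add_pow_of_le_mul hC hδ0 h
    exact ⟨finite_setOf_pos_and_eq_zero_of_le_mul h, C', hC', fun w _ => h' w⟩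
  · rintro ⟨hfin, C, hC, h⟩
    obtain ⟨N, hN⟩ := (hfin.image List.length).bddAbove
    exact ⟨2 * C, by positivity, N + 1,
      le_two_mul_of_le_mul_add_pow (fun w hw => hN ⟨w, hw, rfl⟩) hlow h hC⟩

/-- `s` is eventually big-O of `s'` iff the language difference
`{w | ν_s w > 0 ∧ ν_{s'} w = 0}` is finite and `s` is big-O of `s'` in the automaton
completed with an extra branch of weight `δ^{|w|}` on every nonempty word. -/
theorem eventually_bigO_iff_finite_diff_and_bigO_completed
    {Sigma : Type*} [Fintype Sigma] (νs νs' : List Sigma → ℝ≥0) (δ : ℝ)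
    (hδ0 : 0 < δ) (hδ1 : δ < 1)
    (hlow : ∀ w : List Sigma, w ≠ [] → 0 < νs' w → δ ^ w.length < (νs' w : ℝ)) :
    (∃ C : ℝ, 0 < C ∧ ∃ k : ℕ, ∀ w : List Sigma, k ≤ w.length →
        (νs w : ℝ) ≤ C * (νs' w : ℝ)) ↔
    ({w : List Sigma | 0 < νs w ∧ νs' w = 0}.Finite ∧
      ∃ C : ℝ, 0 < C ∧ ∀ w : List Sigma, w ≠ [] →
        (νs w : ℝ) ≤ C * ((νs' w : ℝ) + δ ^ w.length)) :=
  eventually_bigO_iff_finite_diff_and_bigO_completed_general νs νs' δ hδ0 hlow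
end

section
/- Let Σ be an alphabet, let a_1, …, a_m ∈ Σ be pairwise distinct letters, and let L ⊆ Σ* be a regular language (accepted by some finite automaton) such that L ⊆ { a_1^{n_1} a_2^{n_2} ⋯ a_m^{n_m} | n_1, …, n_m ≥ 1 }. Then there exist S ∈ ℕ and natural numbers b_{k,i}, r_{k,i} ∈ ℕ (for 1 ≤ k ≤ S, 1 ≤ i ≤ m) such that { (n_1, …, n_m) ∈ ℕ^m | a_1^{n_1} ⋯ a_m^{n_m} ∈ L } = ⋃_{k=1}^{S} { (b_{k,1} + r_{k,1}·λ_1, …, b_{k,m} + r_{k,m}·λ_m) | λ_1, …, λ_m ∈ ℕ }. -/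
/-- The word `a_1^{n_1} a_2^{n_2} ⋯ a_m^{n_m}`. -/
def blockWord {Sigma : Type*} {m : ℕ} (a : Fin m → Sigma) (n : Fin m → ℕ) : List Sigma :=
  (List.finRange m).flatMap fun i => List.replicate (n i) (a i)

/-- The normalization map: identity below `N`, then reduced mod `P` into `[N, N+P)`. -/
def phiAux (N P x : ℕ) : ℕ := if x < N then x else N + (x - N) % P

lemma phiAux_lt (N P x : ℕ) (hP : 0 < P) : phiAux N P x < N + P := by
  unfold phiAux
  split
  · omega
  · have := Nat.mod_lt (x - N) hP
    omega

lemma phiAux_eq_self {N P x : ℕ} (h : x < N + P) : phiAux N P x = x := by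
  unfold phiAux
  split
  · rfl
  · have : (x - N) % P = x - N := Nat.mod_eq_of_lt (by omega)
    omega

lemma phiAux_ge {N P x : ℕ} (h : ¬ phiAux N P x < N) : N ≤ x := by
  unfold phiAux at h
  split at h <;> omega

lemma phiAux_lt_self_eq {N P x : ℕ} (h : phiAux N P x < N) : x = phiAux N P x := by
  unfold phiAux at h ⊢
  split at h
  · simp [h]
  · omega

lemma phiAux_exists_lam {N P x : ℕ} (hx : N ≤ x) :
    x = phiAux N P x + P * ((x - N) / P) := by
  unfold phiAux
  rw [if_neg (by omega), add_assoc, Nat.mod_add_div]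
  omega

lemma phiAux_add_mul {N P x : ℕ} (l : ℕ) (hx : N ≤ x) (hxp : x < N + P) :
    phiAux N P (x + P * l) = x := by
  unfold phiAux
  rw [if_neg (by omega)]
  have h1 : x + P * l - N = (x - N) + P * l := by omega
  rw [h1, Nat.add_mul_mod_self_left, Nat.mod_eq_of_lt (by omega)]
  omega

lemma iterate_phiAux {σ : Type*} {N P : ℕ} (f : σ → σ) (hP : 0 < P)
    (h : ∀ k, N ≤ k → f^[k + P] = f^[k]) : ∀ x, f^[x] = f^[phiAux N P x] := by
  intro x
  induction x using Nat.strong_induction_on with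
  | _ x ih =>
    by_cases hx : x < N + P
    · rw [phiAux_eq_self hx]
    · have hxP : P ≤ x := by omega
      have h1 : x = (x - P) + P := by omega
      have h2 : f^[x] = f^[x - P] := by
        conv_lhs => rw [h1]
        exact h (x - P) (by omega)
      rw [h2, ih (x - P) (by omega)]
      unfold phiAux
      rw [if_neg (by omega), if_neg (by omega)]
      have h3 : x - N = (x - P - N) + P := by omega
      rw [h3, Nat.add_mod_right]

lemma evalFrom_replicate {Sigma σ : Type*} (M : DFA Sigma σ) (x : Sigma) :
    ∀ (k : ℕ) (q : σ), M.evalFrom q (List.replicate k x) = (fun s => M.step s x)^[k] q := by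
  intro k
  induction k with
  | zero => intro q; rfl
  | succ k ih =>
    intro q
    rw [List.replicate_succ, Function.iterate_succ_apply]
    exact ih (M.step q x)

lemma evalFrom_blockList {Sigma σ : Type*} (M : DFA Sigma σ) {m : ℕ}
    (a : Fin m → Sigma) (n : Fin m → ℕ) :
    ∀ (l : List (Fin m)) (q : σ),
      M.evalFrom q (l.flatMap fun i => List.replicate (n i) (a i)) =
        l.foldl (fun s i => (fun t => M.step t (a i))^[n i] s) q := by
  intro l
  induction l with
  | nil => intro q; rfl
  | cons i l ih =>
    intro q
    rw [List.flatMap_cons, DFA.evalFrom_of_append, evalFrom_replicate, List.foldl_cons, ih]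

/-- the Parikh image of a plus-letter-bounded regular language
(accepted by a DFA with finitely many states, contained in `a_1^+ ⋯ a_m^+` with the
`a_i` pairwise distinct) is a finite union of linear sets whose period vectors are
constant multiples of unit coordinate vectors. -/
theorem parikh_image_plus_letter_bounded_regular
    {Sigma : Type*} {σ : Type*} [Fintype σ] (M : DFA Sigma σ)
    {m : ℕ} (a : Fin m → Sigma) (hdist : Function.Injective a)
    (hsub : ∀ w ∈ M.accepts, ∃ n : Fin m → ℕ, (∀ i, 1 ≤ n i) ∧ w = blockWord a n) :
    ∃ S : ℕ, ∃ b r : Fin S → Fin m → ℕ,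
      {n : Fin m → ℕ | blockWord a n ∈ M.accepts} =
        ⋃ k : Fin S, {n : Fin m → ℕ | ∃ lam : Fin m → ℕ,
          ∀ i, n i = b k i + r k i * lam i} := by
  classical
  -- the transition map for letter `a i`
  set T : Fin m → σ → σ := fun i s => M.step s (a i) with hT
  -- simultaneous eventual periodicity of all `T i` iterates
  obtain ⟨x, y, hxy, hf⟩ :=
    Finite.exists_ne_map_eq_of_infinite (fun k : ℕ => fun i : Fin m => (T i)^[k])
  wlog hlt : x < y generalizing x y
  · exact this y x hxy.symm hf.symm (by omega)
  set N := x with hN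
  set P := y - x with hPdef
  have hP : 0 < P := by omega
  have hper : ∀ i k, N ≤ k → (T i)^[k + P] = (T i)^[k] := by
    intro i k hk
    have hxyi : (T i)^[x] = (T i)^[y] := congrFun hf i
    have h1 : k + P = (k - N) + y := by omega
    have h2 : k = (k - N) + x := by omega
    rw [h1, Function.iterate_add, ← hxyi, ← Function.iterate_add, ← h2]
  have hiterPhi : ∀ (i : Fin m) (z : ℕ), (T i)^[z] = (T i)^[phiAux N P z] :=
    fun i => iterate_phiAux (T i) hP (hper i)
  -- the evaluation only depends on the normalized exponents
  have gPhi : ∀ n : Fin m → ℕ,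
      M.eval (blockWord a n) = M.eval (blockWord a fun i => phiAux N P (n i)) := by
    intro n
    show M.evalFrom M.start _ = M.evalFrom M.start _
    unfold blockWord
    rw [evalFrom_blockList, evalFrom_blockList]
    congr 1
    funext s i
    exact congrFun (hiterPhi i (n i)) s
  -- the accepting profiles
  set F : Finset (Fin m → Fin (N + P)) :=
    Finset.univ.filter fun c => blockWord a (fun i => (c i : ℕ)) ∈ M.accepts with hF
  refine ⟨F.card, fun k i => ((F.equivFin.symm k : Fin m → Fin (N + P)) i : ℕ),
    fun k i => if ((F.equivFin.symm k : Fin m → Fin (N + P)) i : ℕ) < N then 0 else P, ?_⟩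
  ext n
  simp only [Set.mem_setOf_eq, Set.mem_iUnion]
  constructor
  · intro hacc
    have hc : (fun i => (⟨phiAux N P (n i), phiAux_lt N P (n i) hP⟩ : Fin (N + P))) ∈ F := by
      rw [hF, Finset.mem_filter]
      refine ⟨Finset.mem_univ _, ?_⟩
      rw [DFA.mem_accepts] at hacc ⊢
      rw [← gPhi]
      exact hacc
    refine ⟨F.equivFin ⟨_, hc⟩, fun i => (n i - N) / P, ?_⟩
    intro i
    simp only [Equiv.symm_apply_apply]
    by_cases h : phiAux N P (n i) < N
    · rw [if_pos h, zero_mul, add_zero]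
      exact phiAux_lt_self_eq h
    · rw [if_neg h]
      exact phiAux_exists_lam (phiAux_ge h)
  · rintro ⟨k, lam, hlam⟩
    set c : Fin m → Fin (N + P) := (F.equivFin.symm k : Fin m → Fin (N + P)) with hc
    have hcF : blockWord a (fun i => (c i : ℕ)) ∈ M.accepts :=
      (Finset.mem_filter.mp (F.equivFin.symm k).2).2
    have hphin : ∀ i, phiAux N P (n i) = (c i : ℕ) := by
      intro i
      have hci : (c i : ℕ) < N + P := (c i).2
      by_cases h : (c i : ℕ) < N
      · have : n i = (c i : ℕ) := by
          have := hlam i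
          rw [if_pos h, zero_mul, add_zero] at this
          exact this
        rw [this, phiAux_eq_self (by omega)]
      · have hni : n i = (c i : ℕ) + P * lam i := by
          have := hlam i
          rwa [if_neg h] at this
        rw [hni]
        exact phiAux_add_mul (lam i) (by omega) hci
    rw [DFA.mem_accepts] at hcF ⊢
    rw [gPhi]
    have : (fun i => phiAux N P (n i)) = fun i => (c i : ℕ) := funext hphin
    rw [this]
    exact hcF
end

section
/- Let m ∈ ℕ, let H be a finite index set, let α : H × {1,…,m} → ℝ, p : H × {1,…,m} → ℤ, and b, r : {1,…,m} → ℕ with b_i ≥ 1 for all i; set B = max_i b_i. Then the following are equivalent: (i) for every C ∈ ℝ there exists λ ∈ ℕ^m such that for all j ∈ H, ∑_{i=1}^m ( α_{j,i}·(b_i + r_i·λ_i) + p_{j,i}·log(b_i + r_i·λ_i) ) < C; (ii) there exists a subset U ⊆ {1,…,m} such that for every C ∈ ℝ there exists λ ∈ ℕ^U with λ_i ≥ B for all i ∈ U and, for all j ∈ H, ∑_{i ∈ U} ( α_{j,i}·(b_i + r_i·λ_i) + p_{j,i}·log(b_i + r_i·λ_i) ) < C. -/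
private lemma term_abs_le' {a q x L X LB : ℝ} (hx : |x| ≤ X) (hL : |L| ≤ LB) :
    |a * x + q * L| ≤ |a| * X + |q| * LB := by
  calc |a * x + q * L| ≤ |a * x| + |q * L| := abs_add_le _ _
    _ = |a| * |x| + |q| * |L| := by rw [abs_mul, abs_mul]
    _ ≤ |a| * X + |q| * LB := by gcongr

/-- in the divergence-to-`−∞` condition over natural parameters `λ`,
one may restrict to a subset `U` of components along which the parameters can be
taken at least `B = max_i b_i`. -/
theorem divergence_iff_exists_unbounded_subset
    (m : ℕ) {H : Type*} [Fintype H] (α : H → Fin m → ℝ) (p : H → Fin m → ℤ)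
    (b r : Fin m → ℕ) (hb : ∀ i, 1 ≤ b i) :
    (∀ C : ℝ, ∃ lam : Fin m → ℕ, ∀ j : H,
        ∑ i : Fin m, (α j i * ((b i : ℝ) + (r i : ℝ) * (lam i : ℝ)) +
          (p j i : ℝ) * Real.log ((b i : ℝ) + (r i : ℝ) * (lam i : ℝ))) < C) ↔
    (∃ U : Finset (Fin m), ∀ C : ℝ, ∃ lam : Fin m → ℕ,
        (∀ i ∈ U, Finset.univ.sup b ≤ lam i) ∧ ∀ j : H,
        ∑ i ∈ U, (α j i * ((b i : ℝ) + (r i : ℝ) * (lam i : ℝ)) +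
          (p j i : ℝ) * Real.log ((b i : ℝ) + (r i : ℝ) * (lam i : ℝ))) < C) := by
  have hb1 : ∀ i, (1 : ℝ) ≤ (b i : ℝ) := fun i => by exact_mod_cast hb i
  constructor
  · intro h
    choose lam hlam using fun n : ℕ => h (-(n : ℝ))
    obtain ⟨U, hU⟩ := Finite.exists_infinite_fiber
      (fun n : ℕ => Finset.univ.filter fun i => Finset.univ.sup b ≤ lam n i)
    refine ⟨U, fun C => ?_⟩
    set M : ℝ := (↑(Finset.univ.sup b) : ℝ) + (↑(Finset.univ.sup r) : ℝ) * (↑(Finset.univ.sup b) : ℝ)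
      with hM
    set K : ℝ := ∑ j : H, ∑ i : Fin m, (|α j i| * M + |(p j i : ℝ)| * |Real.log M|) with hK
    have hU' : ((fun n : ℕ => Finset.univ.filter fun i => Finset.univ.sup b ≤ lam n i) ⁻¹'
        {U}).Infinite := Set.infinite_coe_iff.mp hU
    obtain ⟨n, hn, hnlt⟩ := hU'.exists_gt ⌈K - C⌉₊
    have hnU : (Finset.univ.filter fun i => Finset.univ.sup b ≤ lam n i) = U := hn
    refine ⟨lam n, ?_, ?_⟩
    · intro i hi
      rw [← hnU, Finset.mem_filter] at hi
      exact hi.2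
    intro j
    have hsum := hlam n j
    have hKn : K - (n : ℝ) < C := by
      have h1 : K - C ≤ (⌈K - C⌉₊ : ℝ) := Nat.le_ceil _
      have h2 : ((⌈K - C⌉₊ : ℕ) : ℝ) < (n : ℝ) := by exact_mod_cast hnlt
      linarith
    -- bound terms outside U
    have hbound : ∀ i ∈ Uᶜ,
        -(|α j i| * M + |(p j i : ℝ)| * |Real.log M|) ≤
        α j i * ((b i : ℝ) + (r i : ℝ) * (lam n i : ℝ)) +
          (p j i : ℝ) * Real.log ((b i : ℝ) + (r i : ℝ) * (lam n i : ℝ)) := by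
      intro i hi
      rw [Finset.mem_compl, ← hnU, Finset.mem_filter] at hi
      have hlt : lam n i < Finset.univ.sup b := by
        by_contra hc
        exact hi ⟨Finset.mem_univ i, le_of_not_gt hc⟩
      set x : ℝ := (b i : ℝ) + (r i : ℝ) * (lam n i : ℝ) with hx
      have hx1 : (1 : ℝ) ≤ x := by
        have : (0 : ℝ) ≤ (r i : ℝ) * (lam n i : ℝ) := by positivity
        have := hb1 i; simp only [hx]; linarith
      have hxM : x ≤ M := by
        have h1 : (b i : ℝ) ≤ (↑(Finset.univ.sup b) : ℝ) := by
          exact_mod_cast Finset.le_sup (Finset.mem_univ i)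
        have h2 : (r i : ℝ) ≤ (↑(Finset.univ.sup r) : ℝ) := by
          exact_mod_cast Finset.le_sup (Finset.mem_univ i)
        have h3 : (lam n i : ℝ) ≤ (↑(Finset.univ.sup b) : ℝ) := by
          exact_mod_cast hlt.le
        have h4 : (0 : ℝ) ≤ (lam n i : ℝ) := by positivity
        have h5 : (0 : ℝ) ≤ (r i : ℝ) := by positivity
        have : (r i : ℝ) * (lam n i : ℝ) ≤
            (↑(Finset.univ.sup r) : ℝ) * (↑(Finset.univ.sup b) : ℝ) := by
          apply mul_le_mul h2 h3 h4
          positivity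
        simp only [hx, hM]; linarith
      have hlog : |Real.log x| ≤ |Real.log M| := by
        rw [abs_of_nonneg (Real.log_nonneg hx1)]
        exact le_trans (Real.log_le_log (by linarith) hxM) (le_abs_self _)
      have habs : |α j i * x + (p j i : ℝ) * Real.log x| ≤
          |α j i| * M + |(p j i : ℝ)| * |Real.log M| :=
        term_abs_le' (by rw [abs_of_nonneg (by linarith)]; exact hxM) hlog
      have := neg_abs_le (α j i * x + (p j i : ℝ) * Real.log x)
      linarith
    have hcomp : -K ≤ ∑ i ∈ Uᶜ,
        (α j i * ((b i : ℝ) + (r i : ℝ) * (lam n i : ℝ)) +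
          (p j i : ℝ) * Real.log ((b i : ℝ) + (r i : ℝ) * (lam n i : ℝ))) := by
      have h1 : ∑ i ∈ Uᶜ, -(|α j i| * M + |(p j i : ℝ)| * |Real.log M|) ≤ _ :=
        Finset.sum_le_sum hbound
      have h2 : ∑ i ∈ Uᶜ, (|α j i| * M + |(p j i : ℝ)| * |Real.log M|) ≤
          ∑ i : Fin m, (|α j i| * M + |(p j i : ℝ)| * |Real.log M|) :=
        Finset.sum_le_sum_of_subset_of_nonneg (Finset.subset_univ _)
          (fun i _ _ => by positivity)
      have h3 : ∑ i : Fin m, (|α j i| * M + |(p j i : ℝ)| * |Real.log M|) ≤ K := by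
        rw [hK]
        exact Finset.single_le_sum (f := fun j' => ∑ i : Fin m, (|α j' i| * M + |(p j' i : ℝ)| * |Real.log M|)) (fun j' _ => by positivity) (Finset.mem_univ j)
      rw [Finset.sum_neg_distrib] at h1
      linarith
    have hsplit := Finset.sum_add_sum_compl U
      (fun i => α j i * ((b i : ℝ) + (r i : ℝ) * (lam n i : ℝ)) +
        (p j i : ℝ) * Real.log ((b i : ℝ) + (r i : ℝ) * (lam n i : ℝ)))
    linarith
  · rintro ⟨U, hU⟩ C
    set K0 : ℝ := ∑ j : H, ∑ i : Fin m,
      (|α j i| * (b i : ℝ) + |(p j i : ℝ)| * |Real.log (b i : ℝ)|) with hK0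
    obtain ⟨lam, _, hlam⟩ := hU (C - K0)
    refine ⟨fun i => if i ∈ U then lam i else 0, fun j => ?_⟩
    set lam' : Fin m → ℕ := fun i => if i ∈ U then lam i else 0 with hlam'
    have hsplit := Finset.sum_add_sum_compl U
      (fun i => α j i * ((b i : ℝ) + (r i : ℝ) * (lam' i : ℝ)) +
        (p j i : ℝ) * Real.log ((b i : ℝ) + (r i : ℝ) * (lam' i : ℝ)))
    have hUeq : ∑ i ∈ U, (α j i * ((b i : ℝ) + (r i : ℝ) * (lam' i : ℝ)) +
        (p j i : ℝ) * Real.log ((b i : ℝ) + (r i : ℝ) * (lam' i : ℝ))) < C - K0 := by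
      have := hlam j
      calc _ = ∑ i ∈ U, (α j i * ((b i : ℝ) + (r i : ℝ) * (lam i : ℝ)) +
          (p j i : ℝ) * Real.log ((b i : ℝ) + (r i : ℝ) * (lam i : ℝ))) := by
            apply Finset.sum_congr rfl
            intro i hi
            simp [hlam', if_pos hi]
        _ < C - K0 := this
    have hcomp : ∑ i ∈ Uᶜ, (α j i * ((b i : ℝ) + (r i : ℝ) * (lam' i : ℝ)) +
        (p j i : ℝ) * Real.log ((b i : ℝ) + (r i : ℝ) * (lam' i : ℝ))) ≤ K0 := by
      have h1 : ∀ i ∈ Uᶜ, α j i * ((b i : ℝ) + (r i : ℝ) * (lam' i : ℝ)) +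
          (p j i : ℝ) * Real.log ((b i : ℝ) + (r i : ℝ) * (lam' i : ℝ)) ≤
          |α j i| * (b i : ℝ) + |(p j i : ℝ)| * |Real.log (b i : ℝ)| := by
        intro i hi
        rw [Finset.mem_compl] at hi
        have hz : (lam' i : ℝ) = 0 := by simp [hlam', if_neg hi]
        rw [hz, mul_zero, add_zero]
        have habs : |α j i * (b i : ℝ) + (p j i : ℝ) * Real.log (b i : ℝ)| ≤
            |α j i| * (b i : ℝ) + |(p j i : ℝ)| * |Real.log (b i : ℝ)| :=
          term_abs_le' (le_of_eq (abs_of_nonneg (by linarith [hb1 i]))) le_rfl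
        exact le_trans (le_abs_self _) habs
      have h2 : ∑ i ∈ Uᶜ, (|α j i| * (b i : ℝ) + |(p j i : ℝ)| * |Real.log (b i : ℝ)|) ≤
          ∑ i : Fin m, (|α j i| * (b i : ℝ) + |(p j i : ℝ)| * |Real.log (b i : ℝ)|) :=
        Finset.sum_le_sum_of_subset_of_nonneg (Finset.subset_univ _)
          (fun i _ _ => by positivity)
      have h3 : ∑ i : Fin m, (|α j i| * (b i : ℝ) + |(p j i : ℝ)| * |Real.log (b i : ℝ)|) ≤
          K0 := by
        rw [hK0]
        exact Finset.single_le_sum (f := fun j' => ∑ i : Fin m, (|α j' i| * (b i : ℝ) + |(p j' i : ℝ)| * |Real.log (b i : ℝ)|)) (fun j' _ => by positivity) (Finset.mem_univ j)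
      exact le_trans (Finset.sum_le_sum h1) (le_trans h2 h3)
    linarith
end

section
/- Let U be a finite index set, H a finite index set, α : H × U → ℝ, p : H × U → ℤ, and b, r : U → ℕ with b_i ≥ 1 and r_i ≥ 1 for all i ∈ U; set B = max_{i ∈ U} b_i. Then the following are equivalent: (i) for every C ∈ ℝ there exists λ ∈ ℕ^U with λ_i ≥ B for all i, such that for all j ∈ H, ∑_{i ∈ U} ( α_{j,i}·(b_i + r_i·λ_i) + p_{j,i}·log(b_i + r_i·λ_i) ) < C; (ii) for every C ∈ ℝ there exists x ∈ ℝ^U with x_i ≥ B for all i, such that for all j ∈ H, ∑_{i ∈ U} ( α_{j,i}·r_i·x_i + p_{j,i}·log(x_i) ) < C. -/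
/-- the divergence-to-`−∞` condition over natural parameters
`λ_i ≥ B = max_i b_i` is equivalent to the analogous condition over real parameters
`x_i ≥ B`, with the additive offsets `b_i` absorbed. -/
theorem divergence_nat_iff_divergence_real
    {U : Type*} [Fintype U] {H : Type*} [Fintype H]
    (α : H → U → ℝ) (p : H → U → ℤ) (b r : U → ℕ)
    (hb : ∀ i, 1 ≤ b i) (hr : ∀ i, 1 ≤ r i) :
    (∀ C : ℝ, ∃ lam : U → ℕ, (∀ i, Finset.univ.sup b ≤ lam i) ∧ ∀ j : H,
        ∑ i : U, (α j i * ((b i : ℝ) + (r i : ℝ) * (lam i : ℝ)) +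
          (p j i : ℝ) * Real.log ((b i : ℝ) + (r i : ℝ) * (lam i : ℝ))) < C) ↔
    (∀ C : ℝ, ∃ x : U → ℝ, (∀ i, ((Finset.univ.sup b : ℕ) : ℝ) ≤ x i) ∧ ∀ j : H,
        ∑ i : U, (α j i * (r i : ℝ) * x i + (p j i : ℝ) * Real.log (x i)) < C) := by
  have hbR : ∀ i, (1 : ℝ) ≤ (b i : ℝ) := fun i => by exact_mod_cast hb i
  have hrR : ∀ i, (1 : ℝ) ≤ (r i : ℝ) := fun i => by exact_mod_cast hr i
  have hbB : ∀ i, (b i : ℝ) ≤ ((Finset.univ.sup b : ℕ) : ℝ) := fun i => by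
    exact_mod_cast Finset.le_sup (f := b) (Finset.mem_univ i)
  constructor
  · intro h C
    set M1 : ℝ := ∑ j : H, |∑ i : U, (p j i : ℝ) * Real.log (r i)| with hM1
    obtain ⟨lam, hlam, hsum⟩ := h (C - M1)
    refine ⟨fun i => ((b i : ℝ) + (r i : ℝ) * (lam i : ℝ)) / (r i : ℝ), fun i => ?_, fun j => ?_⟩
    · have hr0 : (0 : ℝ) < (r i : ℝ) := lt_of_lt_of_le one_pos (hrR i)
      have h1 : (lam i : ℝ) ≤ ((b i : ℝ) + (r i : ℝ) * (lam i : ℝ)) / (r i : ℝ) := by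
        rw [le_div_iff₀ hr0]
        nlinarith [hbR i]
      have hBl : ((Finset.univ.sup b : ℕ) : ℝ) ≤ (lam i : ℝ) := by exact_mod_cast hlam i
      linarith
    · have key : ∑ i : U, (α j i * (r i : ℝ) *
          (((b i : ℝ) + (r i : ℝ) * (lam i : ℝ)) / (r i : ℝ)) +
          (p j i : ℝ) * Real.log (((b i : ℝ) + (r i : ℝ) * (lam i : ℝ)) / (r i : ℝ)))
          = (∑ i : U, (α j i * ((b i : ℝ) + (r i : ℝ) * (lam i : ℝ)) +
              (p j i : ℝ) * Real.log ((b i : ℝ) + (r i : ℝ) * (lam i : ℝ))))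
            - ∑ i : U, (p j i : ℝ) * Real.log (r i) := by
        rw [← Finset.sum_sub_distrib]
        apply Finset.sum_congr rfl
        intro i _
        have hr0 : (0 : ℝ) < (r i : ℝ) := lt_of_lt_of_le one_pos (hrR i)
        have hpos : (0 : ℝ) < (b i : ℝ) + (r i : ℝ) * (lam i : ℝ) := by
          nlinarith [hbR i, (Nat.cast_nonneg (lam i) : (0:ℝ) ≤ (lam i : ℝ)), hrR i]
        rw [Real.log_div (ne_of_gt hpos) (ne_of_gt hr0)]
        field_simp
        ring
      rw [key]
      have h1 : -∑ i : U, (p j i : ℝ) * Real.log (r i) ≤ M1 := by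
        have habs : |∑ i : U, (p j i : ℝ) * Real.log (r i)| ≤ M1 :=
          Finset.single_le_sum (f := fun j => |∑ i : U, (p j i : ℝ) * Real.log (r i)|)
            (fun j' _ => abs_nonneg _) (Finset.mem_univ j)
        linarith [neg_le_abs (∑ i : U, (p j i : ℝ) * Real.log (r i))]
      linarith [hsum j]
  · intro h C
    set M2 : ℝ := ∑ j : H, ∑ i : U, (|α j i| * ((b i : ℝ) + (r i : ℝ)) +
        |(p j i : ℝ)| * Real.log ((r i : ℝ) * ((b i : ℝ) + 2))) with hM2
    obtain ⟨x, hx, hsum⟩ := h (C - M2)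
    refine ⟨fun i => ⌈x i⌉₊, fun i => ?_, fun j => ?_⟩
    · calc Finset.univ.sup b = ⌈((Finset.univ.sup b : ℕ) : ℝ)⌉₊ := (Nat.ceil_natCast _).symm
        _ ≤ ⌈x i⌉₊ := Nat.ceil_mono (hx i)
    · have hK : ∀ i ∈ Finset.univ, α j i * ((b i : ℝ) + (r i : ℝ) * ((⌈x i⌉₊ : ℕ) : ℝ)) +
          (p j i : ℝ) * Real.log ((b i : ℝ) + (r i : ℝ) * ((⌈x i⌉₊ : ℕ) : ℝ))
        ≤ (α j i * (r i : ℝ) * x i + (p j i : ℝ) * Real.log (x i)) +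
          (|α j i| * ((b i : ℝ) + (r i : ℝ)) +
            |(p j i : ℝ)| * Real.log ((r i : ℝ) * ((b i : ℝ) + 2))) := by
        intro i _
        have hx1 : (1 : ℝ) ≤ x i := le_trans (le_trans (hbR i) (hbB i)) (hx i)
        have hx0 : (0 : ℝ) < x i := lt_of_lt_of_le one_pos hx1
        have hr1 : (1 : ℝ) ≤ (r i : ℝ) := hrR i
        have hb1 : (1 : ℝ) ≤ (b i : ℝ) := hbR i
        have hc1 : x i ≤ ((⌈x i⌉₊ : ℕ) : ℝ) := Nat.le_ceil _
        have hc2 : ((⌈x i⌉₊ : ℕ) : ℝ) ≤ x i + 1 := le_of_lt (Nat.ceil_lt_add_one hx0.le)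
        set y : ℝ := (b i : ℝ) + (r i : ℝ) * ((⌈x i⌉₊ : ℕ) : ℝ) with hy
        have hyx : (r i : ℝ) * x i ≤ y := by nlinarith
        have hxy : x i ≤ y := by nlinarith
        have hyub : y ≤ x i * ((r i : ℝ) * ((b i : ℝ) + 2)) := by
          nlinarith [mul_le_mul_of_nonneg_left hc2 (by linarith : (0:ℝ) ≤ (r i : ℝ)),
            mul_nonneg (mul_nonneg (by linarith : (0:ℝ) ≤ (r i : ℝ))
              (by linarith : (0:ℝ) ≤ (b i : ℝ))) (sub_nonneg.2 hx1),
            mul_nonneg (by linarith : (0:ℝ) ≤ (r i : ℝ)) (sub_nonneg.2 hx1),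
            mul_nonneg (by linarith : (0:ℝ) ≤ (b i : ℝ)) (sub_nonneg.2 hr1)]
        have hlog1 : Real.log (x i) ≤ Real.log y :=
          Real.log_le_log hx0 hxy
        have hlog2 : Real.log y ≤ Real.log (x i) + Real.log ((r i : ℝ) * ((b i : ℝ) + 2)) := by
          have := Real.log_le_log (lt_of_lt_of_le hx0 hxy) hyub
          rwa [Real.log_mul (ne_of_gt hx0) (by positivity)] at this
        have hd0 : (0 : ℝ) ≤ y - (r i : ℝ) * x i := by linarith
        have hd1 : y - (r i : ℝ) * x i ≤ (b i : ℝ) + (r i : ℝ) := by nlinarith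
        have ha1 : α j i ≤ |α j i| := le_abs_self _
        have ha2 : -|α j i| ≤ α j i := neg_abs_le _
        have hp1 : (p j i : ℝ) ≤ |(p j i : ℝ)| := le_abs_self _
        have hp2 : -|(p j i : ℝ)| ≤ (p j i : ℝ) := neg_abs_le _
        nlinarith [mul_nonneg (sub_nonneg.2 ha1) hd0,
          mul_nonneg (sub_nonneg.2 hp1) (sub_nonneg.2 hlog1),
          mul_nonneg (abs_nonneg (α j i)) (sub_nonneg.2 hd1),
          mul_nonneg (abs_nonneg ((p j i : ℝ)))
            (sub_nonneg.2 (by linarith : Real.log y - Real.log (x i) ≤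
              Real.log ((r i : ℝ) * ((b i : ℝ) + 2))))]
      have hKj : ∑ i : U, (|α j i| * ((b i : ℝ) + (r i : ℝ)) +
          |(p j i : ℝ)| * Real.log ((r i : ℝ) * ((b i : ℝ) + 2))) ≤ M2 := by
        refine Finset.single_le_sum (f := fun j => ∑ i : U, (|α j i| * ((b i : ℝ) + (r i : ℝ)) +
          |(p j i : ℝ)| * Real.log ((r i : ℝ) * ((b i : ℝ) + 2))))
          (fun j' _ => Finset.sum_nonneg fun i _ => ?_) (Finset.mem_univ j)
        have hlg : (0:ℝ) ≤ Real.log ((r i : ℝ) * ((b i : ℝ) + 2)) :=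
          Real.log_nonneg (by nlinarith [hrR i, hbR i])
        exact add_nonneg (mul_nonneg (abs_nonneg _) (by positivity))
          (mul_nonneg (abs_nonneg _) hlg)
      calc ∑ i : U, (α j i * ((b i : ℝ) + (r i : ℝ) * ((⌈x i⌉₊ : ℕ) : ℝ)) +
            (p j i : ℝ) * Real.log ((b i : ℝ) + (r i : ℝ) * ((⌈x i⌉₊ : ℕ) : ℝ)))
          ≤ ∑ i : U, ((α j i * (r i : ℝ) * x i + (p j i : ℝ) * Real.log (x i)) +
            (|α j i| * ((b i : ℝ) + (r i : ℝ)) +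
              |(p j i : ℝ)| * Real.log ((r i : ℝ) * ((b i : ℝ) + 2)))) :=
            Finset.sum_le_sum hK
        _ = (∑ i : U, (α j i * (r i : ℝ) * x i + (p j i : ℝ) * Real.log (x i))) +
            ∑ i : U, (|α j i| * ((b i : ℝ) + (r i : ℝ)) +
              |(p j i : ℝ)| * Real.log ((r i : ℝ) * ((b i : ℝ) + 2))) :=
            Finset.sum_add_distrib
        _ < (C - M2) + M2 := by
            have := hsum j
            linarith
        _ = C := by ring
end

section
/- Let m, k, ℓ be positive natural numbers, and let p_i (1 ≤ i ≤ k), r_i (1 ≤ i ≤ ℓ), q_{i,j} (1 ≤ i ≤ k, 1 ≤ j ≤ m), and s_{i,j} (1 ≤ i ≤ ℓ, 1 ≤ j ≤ m) be strictly positive real numbers. Then the following are equivalent: (i) for every real C > 0 there exists n ∈ ℕ^m such that ∑_{i=1}^k p_i · ∏_{j=1}^m (q_{i,j})^{n_j} ≥ C · ∑_{i=1}^ℓ r_i · ∏_{j=1}^m (s_{i,j})^{n_j}; (ii) for every real C > 0 there exists x ∈ ℝ^m with x_j ≥ 0 for all j, such that ∑_{i=1}^k p_i · ∏_{j=1}^m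 (q_{i,j})^{x_j} ≥ C · ∑_{i=1}^ℓ r_i · ∏_{j=1}^m (s_{i,j})^{x_j}. -/
open Finset

/-- For `0 < a` and `t ∈ [0,1]`, `min a 1 ≤ a ^ t ≤ max a 1`. -/
lemma rpow_mem_min_max {a t : ℝ} (ha : 0 < a) (ht0 : 0 ≤ t) (ht1 : t ≤ 1) :
    min a 1 ≤ a ^ t ∧ a ^ t ≤ max a 1 := by
  rcases le_total 1 a with h1 | h1
  · constructor
    · have := Real.rpow_le_rpow_of_exponent_le h1 ht0
      simpa [min_eq_right h1, Real.rpow_zero] using Real.rpow_le_rpow_of_exponent_le h1 ht0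
    · have := Real.rpow_le_rpow_of_exponent_le h1 ht1
      simpa [max_eq_left h1, Real.rpow_one] using this
  · constructor
    · have := Real.rpow_le_rpow_of_exponent_ge ha h1 ht1
      simpa [min_eq_left h1, Real.rpow_one] using this
    · have := Real.rpow_le_rpow_of_exponent_ge ha h1 ht0
      simpa [max_eq_right h1, Real.rpow_zero] using this

/-- Rounding exponents up changes a product of powers by a bounded factor. -/
lemma prod_pow_ceil_bounds {m : ℕ} (a : Fin m → ℝ) (ha : ∀ j, 0 < a j)
    (x : Fin m → ℝ) (hx : ∀ j, 0 ≤ x j) :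
    (∏ j, min (a j) 1) * ∏ j, a j ^ (x j) ≤ ∏ j, (a j) ^ (⌈x j⌉₊ : ℕ) ∧
    ∏ j, (a j) ^ (⌈x j⌉₊ : ℕ) ≤ (∏ j, max (a j) 1) * ∏ j, a j ^ (x j) := by
  have key : ∀ j, (a j) ^ (⌈x j⌉₊ : ℕ) = a j ^ (x j) * a j ^ ((⌈x j⌉₊ : ℝ) - x j) := by
    intro j
    rw [← Real.rpow_natCast, ← Real.rpow_add (ha j)]
    ring_nf
  have ht : ∀ j, 0 ≤ (⌈x j⌉₊ : ℝ) - x j ∧ (⌈x j⌉₊ : ℝ) - x j ≤ 1 := by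
    intro j
    constructor
    · linarith [Nat.le_ceil (x j)]
    · have := Nat.ceil_lt_add_one (hx j)
      linarith
  have hmm : ∀ j, min (a j) 1 ≤ a j ^ ((⌈x j⌉₊ : ℝ) - x j) ∧
      a j ^ ((⌈x j⌉₊ : ℝ) - x j) ≤ max (a j) 1 := fun j =>
    rpow_mem_min_max (ha j) (ht j).1 (ht j).2
  have hrw : ∏ j, (a j) ^ (⌈x j⌉₊ : ℕ)
      = (∏ j, a j ^ (x j)) * ∏ j, a j ^ ((⌈x j⌉₊ : ℝ) - x j) := by
    rw [← Finset.prod_mul_distrib]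
    exact Finset.prod_congr rfl fun j _ => key j
  constructor
  · rw [hrw, mul_comm ((∏ j, min (a j) 1)) _]
    apply mul_le_mul_of_nonneg_left
    · exact Finset.prod_le_prod (fun j _ => le_min (ha j).le zero_le_one)
        (fun j _ => (hmm j).1)
    · exact Finset.prod_nonneg fun j _ => Real.rpow_nonneg (ha j).le _
  · rw [hrw, mul_comm ((∏ j, max (a j) 1)) _]
    apply mul_le_mul_of_nonneg_left
    · exact Finset.prod_le_prod (fun j _ => Real.rpow_nonneg (ha j).le _)
        (fun j _ => (hmm j).2)
    · exact Finset.prod_nonneg fun j _ => Real.rpow_nonneg (ha j).le _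

/-- unboundedness of the ratio of sums of products of powers over
natural-number exponent vectors is equivalent to the corresponding condition over
nonnegative real exponent vectors (real exponentiation `q ^ x = exp (x · log q)`). -/
theorem ratio_unbounded_nat_iff_real
    (m k l : ℕ) (hm : 0 < m) (hk : 0 < k) (hl : 0 < l)
    (p : Fin k → ℝ) (r : Fin l → ℝ) (q : Fin k → Fin m → ℝ) (s : Fin l → Fin m → ℝ)
    (hp : ∀ i, 0 < p i) (hr : ∀ i, 0 < r i)
    (hq : ∀ i j, 0 < q i j) (hs : ∀ i j, 0 < s i j) :
    (∀ C : ℝ, 0 < C → ∃ n : Fin m → ℕ,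
        C * ∑ i : Fin l, r i * ∏ j : Fin m, s i j ^ (n j)
          ≤ ∑ i : Fin k, p i * ∏ j : Fin m, q i j ^ (n j)) ↔
    (∀ C : ℝ, 0 < C → ∃ x : Fin m → ℝ, (∀ j, 0 ≤ x j) ∧
        C * ∑ i : Fin l, r i * ∏ j : Fin m, s i j ^ (x j)
          ≤ ∑ i : Fin k, p i * ∏ j : Fin m, q i j ^ (x j)) := by
  constructor
  · intro h C hC
    obtain ⟨n, hn⟩ := h C hC
    refine ⟨fun j => (n j : ℝ), fun j => Nat.cast_nonneg _, ?_⟩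
    simpa [Real.rpow_natCast] using hn
  · intro h C hC
    set A : ℝ := ∏ i : Fin k, ∏ j : Fin m, min (q i j) 1 with hAdef
    set B : ℝ := ∏ i : Fin l, ∏ j : Fin m, max (s i j) 1 with hBdef
    have hA : 0 < A := Finset.prod_pos fun i _ =>
      Finset.prod_pos fun j _ => lt_min (hq i j) one_pos
    have hB : 0 < B := Finset.prod_pos fun i _ =>
      Finset.prod_pos fun j _ => lt_max_of_lt_left (hs i j)
    obtain ⟨x, hx0, hx⟩ := h (C * B / A) (by positivity)
    refine ⟨fun j => ⌈x j⌉₊, ?_⟩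
    -- per-i bounds
    have hAle : ∀ i : Fin k, A ≤ ∏ j, min (q i j) 1 := by
      intro i
      have := (Finset.mul_prod_erase Finset.univ
        (fun i' => ∏ j, min (q i' j) 1) (Finset.mem_univ i)).symm
      rw [hAdef, this]
      have h1 : ∏ i' ∈ Finset.univ.erase i, ∏ j, min (q i' j) 1 ≤ 1 :=
        Finset.prod_le_one
          (fun i' _ => Finset.prod_nonneg fun j _ => le_min (hq i' j).le zero_le_one)
          (fun i' _ => Finset.prod_le_one
            (fun j _ => le_min (hq i' j).le zero_le_one)
            (fun j _ => min_le_right _ _))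
      have h2 : 0 ≤ ∏ j, min (q i j) 1 :=
        Finset.prod_nonneg fun j _ => le_min (hq i j).le zero_le_one
      calc (∏ j, min (q i j) 1) * ∏ i' ∈ Finset.univ.erase i, ∏ j, min (q i' j) 1
          ≤ (∏ j, min (q i j) 1) * 1 := mul_le_mul_of_nonneg_left h1 h2
        _ = ∏ j, min (q i j) 1 := mul_one _
    have hBge : ∀ i : Fin l, ∏ j, max (s i j) 1 ≤ B := by
      intro i
      have := (Finset.mul_prod_erase Finset.univ
        (fun i' => ∏ j, max (s i' j) 1) (Finset.mem_univ i)).symm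
      rw [hBdef, this]
      have h1 : (1:ℝ) ≤ ∏ i' ∈ Finset.univ.erase i, ∏ j, max (s i' j) 1 := by
        have := Finset.prod_le_prod (s := Finset.univ.erase i)
          (f := fun _ : Fin l => ∏ _j : Fin m, (1:ℝ))
          (g := fun i' => ∏ j, max (s i' j) 1)
          (fun _ _ => Finset.prod_nonneg fun _ _ => zero_le_one)
          (fun i' _ => Finset.prod_le_prod (fun _ _ => zero_le_one)
            (fun j _ => le_max_right _ _))
        simpa using this
      have h2 : 0 ≤ ∏ j, max (s i j) 1 :=
        Finset.prod_nonneg fun j _ => le_trans zero_le_one (le_max_right _ _)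
      nlinarith
    -- numerator
    have hnum : A * ∑ i : Fin k, p i * ∏ j, q i j ^ (x j)
        ≤ ∑ i : Fin k, p i * ∏ j, q i j ^ (⌈x j⌉₊ : ℕ) := by
      rw [Finset.mul_sum]
      apply Finset.sum_le_sum
      intro i _
      rw [← mul_assoc, mul_comm A (p i), mul_assoc]
      apply mul_le_mul_of_nonneg_left _ (hp i).le
      calc A * ∏ j, q i j ^ (x j)
          ≤ (∏ j, min (q i j) 1) * ∏ j, q i j ^ (x j) :=
            mul_le_mul_of_nonneg_right (hAle i)
              (Finset.prod_nonneg fun j _ => Real.rpow_nonneg (hq i j).le _)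
        _ ≤ ∏ j, q i j ^ (⌈x j⌉₊ : ℕ) :=
            (prod_pow_ceil_bounds (q i) (hq i) x hx0).1
    -- denominator
    have hden : ∑ i : Fin l, r i * ∏ j, s i j ^ (⌈x j⌉₊ : ℕ)
        ≤ B * ∑ i : Fin l, r i * ∏ j, s i j ^ (x j) := by
      rw [Finset.mul_sum]
      apply Finset.sum_le_sum
      intro i _
      rw [← mul_assoc, mul_comm B (r i), mul_assoc]
      apply mul_le_mul_of_nonneg_left _ (hr i).le
      calc ∏ j, s i j ^ (⌈x j⌉₊ : ℕ)
          ≤ (∏ j, max (s i j) 1) * ∏ j, s i j ^ (x j) :=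
            (prod_pow_ceil_bounds (s i) (hs i) x hx0).2
        _ ≤ B * ∏ j, s i j ^ (x j) :=
            mul_le_mul_of_nonneg_right (hBge i)
              (Finset.prod_nonneg fun j _ => Real.rpow_nonneg (hs i j).le _)
    calc C * ∑ i : Fin l, r i * ∏ j, s i j ^ (⌈x j⌉₊ : ℕ)
        ≤ C * (B * ∑ i : Fin l, r i * ∏ j, s i j ^ (x j)) :=
          mul_le_mul_of_nonneg_left hden hC.le
      _ = A * ((C * B / A) * ∑ i : Fin l, r i * ∏ j, s i j ^ (x j)) := by
          field_simp
      _ ≤ A * ∑ i : Fin k, p i * ∏ j, q i j ^ (x j) :=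
          mul_le_mul_of_nonneg_left hx hA.le
      _ ≤ ∑ i : Fin k, p i * ∏ j, q i j ^ (⌈x j⌉₊ : ℕ) := hnum
end
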